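/- Let (M̃, d̃) be a metric space, λ > 1, and h_k : M̃ → M̃ (k ≥ 0) maps. Let f̃, f̃_k : M̃ → M̃ satisfy: f̃_k^n ∘ h_k = h_{k+n} ∘ f̃^n for all k, n (semi-conjugacy relations), d̃(f̃_k^n(u), f̃_k^n(v)) ≥ λ^n d̃(u,v) for all u,v (uniform expansion of the compositions), and there is c > 0 with d̃(z, h_m(z)) ≤ c for all m ≥ 0 and z ∈ M̃. Then the family {h_k}_{k≥0} is uniformly equicontinuous; in fact, for all y, z and all n, d̃(h_k(y), h_k(z)) ≤ 2c λ^{-n} + λ^{-n} d̃(f̃^n(y), f̃^n(z)). -/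

import Mathlib

/-- The composition `F_k^n = F_{k+n-1} ∘ ⋯ ∘ F_k`. -/
def itc {M : Type*} (F : ℕ → M → M) : ℕ → ℕ → M → M
  | _, 0 => id
  | k, n + 1 => fun z => F (k + n) (itc F k (n : ℕ) z)

theorem mul_dist_le_of_expanding_semiconj {M : Type*} [PseudoMetricSpace M]
    {lam c : ℝ} {G H H' f : M → M}
    (hexp : ∀ u v, lam * dist u v ≤ dist (G u) (G v))
    (hsemi : ∀ z, G (H z) = H' (f z)) (hbd : ∀ z, dist z (H' z) ≤ c) (y z : M) :
    lam * dist (H y) (H z) ≤ 2 * c + dist (f y) (f z) :=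
  calc lam * dist (H y) (H z)
      ≤ dist (H' (f y)) (H' (f z)) := hsemi y ▸ hsemi z ▸ hexp (H y) (H z)
    _ ≤ dist (H' (f y)) (f y) + dist (f y) (f z) + dist (f z) (H' (f z)) := dist_triangle4 _ _ _ _
    _ ≤ c + dist (f y) (f z) + c := by
        gcongr
        · exact dist_comm (f y) _ ▸ hbd (f y)
        · exact hbd (f z)
    _ = 2 * c + dist (f y) (f z) := by ring

theorem stmt17_general {M : Type*} [MetricSpace M]
    (lam : ℝ) (hlam : 1 < lam) (c : ℝ)
    (ft : M → M) (F : ℕ → M → M) (h : ℕ → M → M)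
    (hsemi : ∀ k n : ℕ, ∀ z : M, itc F k n (h k z) = h (k + n) (ft^[n] z))
    (hexp : ∀ k n : ℕ, ∀ u v : M, lam ^ n * dist u v ≤ dist (itc F k n u) (itc F k n v))
    (hbd : ∀ m : ℕ, ∀ z : M, dist z (h m z) ≤ c) :
    ∀ k n : ℕ, ∀ y z : M,
      dist (h k y) (h k z) ≤ 2 * c / lam ^ n + dist (ft^[n] y) (ft^[n] z) / lam ^ n := by
  intro k n y z
  have hpow : 0 < lam ^ n := pow_pos (by linarith) n
  rw [← add_div, le_div_iff₀ hpow, mul_comm]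
  exact mul_dist_le_of_expanding_semiconj (hexp k n) (hsemi k n) (hbd (k + n)) y z

/-- The equicontinuity estimate from the equi-conjugacy theorem: if
`f̃_k^n ∘ h_k = h_{k+n} ∘ f̃^n`, the compositions `f̃_k^n` expand distances by `λ^n`,
and `d(z, h_m(z)) ≤ c` uniformly, then
`d(h_k(y), h_k(z)) ≤ 2c λ^{-n} + λ^{-n} d(f̃^n(y), f̃^n(z))` for all `n`;
in particular the family `{h_k}` is uniformly equicontinuous. -/
theorem stmt17 {M : Type*} [MetricSpace M]
    (lam : ℝ) (hlam : 1 < lam) (c : ℝ) (hc : 0 < c)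
    (ft : M → M) (F : ℕ → M → M) (h : ℕ → M → M)
    (hsemi : ∀ k n : ℕ, ∀ z : M, itc F k n (h k z) = h (k + n) (ft^[n] z))
    (hexp : ∀ k n : ℕ, ∀ u v : M, lam ^ n * dist u v ≤ dist (itc F k n u) (itc F k n v))
    (hbd : ∀ m : ℕ, ∀ z : M, dist z (h m z) ≤ c) :
    ∀ k n : ℕ, ∀ y z : M,
      dist (h k y) (h k z) ≤ 2 * c / lam ^ n + dist (ft^[n] y) (ft^[n] z) / lam ^ n :=
  stmt17_general lam hlam c ft F h hsemi hexp hbd
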